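/- arXiv:2509.16981 — 2 statements merged into one kernel-verified Lean document; each statement's English description precedes it below -/
import Mathlib

section
/- Let E ⊆ ℝ and let 𝒜 be a finite collection of open intervals of ℝ whose union contains E. Then there exists a subcollection 𝒜′ ⊆ 𝒜 whose union still contains E, such that every point of ℝ belongs to at most two intervals of 𝒜′. -/
/-- If `a ∈ S \ T` and `b ∈ T \ S` where `S, T` are order-connected sets both
containing `x`, then `a` and `b` lie on opposite sides of `x`. -/
lemma opposite_sides {S T : Set ℝ} (hS : S.OrdConnected) (hT : T.OrdConnected)
    {x a b : ℝ} (hxS : x ∈ S) (hxT : x ∈ T) (ha : a ∈ S) (hb : b ∈ T)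
    (haT : a ∉ T) (hbS : b ∉ S) : (a < x ∧ x < b) ∨ (b < x ∧ x < a) := by
  have hax : a ≠ x := fun h => haT (h ▸ hxT)
  have hbx : b ≠ x := fun h => hbS (h ▸ hxS)
  rcases lt_or_gt_of_ne hax with h1 | h1 <;> rcases lt_or_gt_of_ne hbx with h2 | h2
  · rcases le_total a b with h3 | h3
    · exact absurd (hS.out ha hxS ⟨h3, h2.le⟩) hbS
    · exact absurd (hT.out hb hxT ⟨h3, h1.le⟩) haT
  · exact Or.inl ⟨h1, h2⟩
  · exact Or.inr ⟨h2, h1⟩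
  · rcases le_total a b with h3 | h3
    · exact absurd (hT.out hxT hb ⟨h1.le, h3⟩) haT
    · exact absurd (hS.out hxS ha ⟨h2.le, h3⟩) hbS

/-- Among three order-connected subsets of ℝ sharing a common point,
one is contained in the union of the other two. -/
lemma ordConnected_three {I J K : Set ℝ} (hI : I.OrdConnected)
    (hJ : J.OrdConnected) (hK : K.OrdConnected) {x : ℝ}
    (hxI : x ∈ I) (hxJ : x ∈ J) (hxK : x ∈ K) :
    I ⊆ J ∪ K ∨ J ⊆ I ∪ K ∨ K ⊆ I ∪ J := by
  by_contra h
  push_neg at h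
  obtain ⟨hu0, hv0, hw0⟩ := h
  obtain ⟨u, hu, hu'⟩ := Set.not_subset.mp hu0
  obtain ⟨v, hv, hv'⟩ := Set.not_subset.mp hv0
  obtain ⟨w, hw, hw'⟩ := Set.not_subset.mp hw0
  simp only [Set.mem_union, not_or] at hu' hv' hw'
  have h1 := opposite_sides hI hJ hxI hxJ hu hv hu'.1 hv'.1
  have h2 := opposite_sides hI hK hxI hxK hu hw hu'.2 hw'.1
  have h3 := opposite_sides hJ hK hxJ hxK hv hw hv'.2 hw'.2
  rcases h1 with ⟨a1, a2⟩ | ⟨a1, a2⟩ <;> rcases h2 with ⟨b1, b2⟩ | ⟨b1, b2⟩ <;>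
    rcases h3 with ⟨c1, c2⟩ | ⟨c1, c2⟩ <;> linarith

open Classical in
theorem one_dimensional_covering_lemma (E : Set ℝ) (𝒜 : Finset (Set ℝ))
    (h𝒜 : ∀ I ∈ 𝒜, IsOpen I ∧ I.OrdConnected ∧ I.Nonempty)
    (hcov : E ⊆ ⋃₀ (𝒜 : Set (Set ℝ))) :
    ∃ 𝒜' ⊆ 𝒜, E ⊆ ⋃₀ (𝒜' : Set (Set ℝ)) ∧
      ∀ x : ℝ, (𝒜'.filter (fun I => x ∈ I)).card ≤ 2 := by
  classical
  -- Take a subcover of minimal cardinality.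
  have hS : 𝒜 ∈ 𝒜.powerset.filter (fun B : Finset (Set ℝ) => E ⊆ ⋃₀ (↑B : Set (Set ℝ))) := by
    simp [hcov]
  obtain ⟨𝒜', h𝒜'mem, hmin⟩ :=
    (𝒜.powerset.filter (fun B : Finset (Set ℝ) => E ⊆ ⋃₀ (↑B : Set (Set ℝ)))).exists_min_image
      Finset.card ⟨𝒜, hS⟩
  simp only [Finset.mem_filter, Finset.mem_powerset] at h𝒜'mem
  obtain ⟨hsub, hcov'⟩ := h𝒜'mem
  refine ⟨𝒜', hsub, hcov', fun x => ?_⟩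
  by_contra hcard
  push_neg at hcard
  obtain ⟨I, hI, J, hJ, K, hK, hIJ, hIK, hJK⟩ := Finset.two_lt_card.mp hcard
  simp only [Finset.mem_filter] at hI hJ hK
  obtain ⟨hImem, hxI⟩ := hI
  obtain ⟨hJmem, hxJ⟩ := hJ
  obtain ⟨hKmem, hxK⟩ := hK
  have hIc := (h𝒜 I (hsub hImem)).2.1
  have hJc := (h𝒜 J (hsub hJmem)).2.1
  have hKc := (h𝒜 K (hsub hKmem)).2.1
  -- one of I, J, K is contained in the union of the other two; erase it
  have main : ∀ A B C : Set ℝ, A ∈ 𝒜' → B ∈ 𝒜' → C ∈ 𝒜' →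
      B ≠ A → C ≠ A → A ⊆ B ∪ C → False := by
    intro A B C hA hB hC hBA hCA hsubA
    have hcovA : E ⊆ ⋃₀ ((𝒜'.erase A : Finset (Set ℝ)) : Set (Set ℝ)) := by
      intro y hy
      obtain ⟨L, hL, hyL⟩ := hcov' hy
      by_cases hLA : L = A
      · rcases hsubA (hLA ▸ hyL) with h | h
        · exact ⟨B, Finset.mem_coe.mpr (Finset.mem_erase.mpr ⟨hBA, hB⟩), h⟩
        · exact ⟨C, Finset.mem_coe.mpr (Finset.mem_erase.mpr ⟨hCA, hC⟩), h⟩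
      · exact ⟨L, Finset.mem_coe.mpr (Finset.mem_erase.mpr ⟨hLA, hL⟩), hyL⟩
    have hmem : 𝒜'.erase A ∈
        (𝒜.powerset.filter (fun B : Finset (Set ℝ) => E ⊆ ⋃₀ (↑B : Set (Set ℝ)))) := by
      simp only [Finset.mem_filter, Finset.mem_powerset]
      exact ⟨(Finset.erase_subset _ _).trans hsub, hcovA⟩
    have := hmin _ hmem
    have := Finset.card_erase_lt_of_mem hA
    omega
  rcases ordConnected_three hIc hJc hKc hxI hxJ hxK with h | h | h
  · exact main I J K hImem hJmem hKmem hIJ.symm hIK.symm h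
  · exact main J I K hJmem hImem hKmem hIJ hJK.symm h
  · exact main K I J hKmem hImem hJmem hIK hJK h
end

section
/- Let μ be a Borel probability measure on ℝ and let g ∈ L¹(μ) with g ≥ 0. Define the uncentered minimal function g_*(x) = inf { (1/μ(I)) ∫_I g dμ : I an open interval with x ∈ I and μ(I) > 0 }. Then for every λ > 0, ∫_{{x : g_*(x) < λ}} g dμ ≤ 2λ. -/
/-
An interval on which `g` averages less than `λ` carries `g`-mass at most `λ` times its
`μ`-measure, and the level set `{g_* < λ}` is the union of all such open intervals. By inner
regularity it suffices to bound the `g`-mass of a compact subset, which is covered by finitely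
many of these intervals. Discarding intervals contained in the union of the others leaves a
subcover in which no point lies in three intervals (of three intervals through a common point,
one lies in the union of the other two), so the `μ`-measures of its intervals add up to at most `2`.
-/

open MeasureTheory Set Finset
open scoped ENNReal

theorem Set.OrdConnected.mul_sub_neg_of_mem_diff {I J : Set ℝ} (hI : I.OrdConnected)
    (hJ : J.OrdConnected) {p x y : ℝ} (hpI : p ∈ I) (hpJ : p ∈ J) (hx : x ∈ I \ J)
    (hy : y ∈ J \ I) : (x - p) * (y - p) < 0 := by
  have hyx : y ∉ uIcc x p := fun h => hy.2 (hI.uIcc_subset hx.1 hpI h)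
  have hxy : x ∉ uIcc y p := fun h => hx.2 (hJ.uIcc_subset hy.1 hpJ h)
  have hxp : x ≠ p := fun h => hx.2 (h ▸ hpJ)
  have hyp : y ≠ p := fun h => hy.2 (h ▸ hpI)
  simp only [mem_uIcc, not_or, not_and_or, not_le] at hyx hxy
  rcases hxp.lt_or_gt with hx' | hx' <;> rcases hyp.lt_or_gt with hy' | hy'
  · grind
  · exact mul_neg_of_neg_of_pos (by linarith) (by linarith)
  · exact mul_neg_of_pos_of_neg (by linarith) (by linarith)
  · grind

theorem Set.OrdConnected.subset_union_of_mem {I J K : Set ℝ} (hI : I.OrdConnected)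
    (hJ : J.OrdConnected) (hK : K.OrdConnected) {p : ℝ} (hpI : p ∈ I) (hpJ : p ∈ J)
    (hpK : p ∈ K) : I ⊆ J ∪ K ∨ J ⊆ I ∪ K ∨ K ⊆ I ∪ J := by
  by_contra! h
  obtain ⟨⟨x, hxI, hxJK⟩, ⟨y, hyJ, hyIK⟩, ⟨z, hzK, hzIJ⟩⟩ :=
    And.imp not_subset.mp (And.imp not_subset.mp not_subset.mp) h
  simp only [mem_union, not_or] at hxJK hyIK hzIJ
  have hxy := hI.mul_sub_neg_of_mem_diff hJ hpI hpJ ⟨hxI, hxJK.1⟩ ⟨hyJ, hyIK.1⟩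
  have hyz := hJ.mul_sub_neg_of_mem_diff hK hpJ hpK ⟨hyJ, hyIK.2⟩ ⟨hzK, hzIJ.2⟩
  have hxz := hI.mul_sub_neg_of_mem_diff hK hpI hpK ⟨hxI, hxJK.2⟩ ⟨hzK, hzIJ.1⟩
  -- the product of the three negative numbers is a square
  nlinarith [sq_nonneg ((x - p) * (y - p) * (z - p)), mul_pos_of_neg_of_neg hxy hyz]

open scoped Classical in
theorem card_filter_mem_le_two_of_ordConnected {s : Finset (Set ℝ)}
    (hs : ∀ I ∈ s, I.OrdConnected) (hirr : ∀ I ∈ s, ¬I ⊆ ⋃ J ∈ s.erase I, J) (p : ℝ) :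
    #{I ∈ s | p ∈ I} ≤ 2 := by
  by_contra! h
  obtain ⟨I, hI, J, hJ, K, hK, hIJ, hIK, hJK⟩ := two_lt_card.mp h
  simp only [Finset.mem_filter] at hI hJ hK
  have redundant {A B C : Set ℝ} (hA : A ∈ s) (hB : B ∈ s) (hC : C ∈ s) (hAB : A ≠ B)
      (hAC : A ≠ C) (hABC : A ⊆ B ∪ C) : False := by
    refine hirr A hA (hABC.trans (union_subset ?_ ?_)) <;>
      exact subset_biUnion_of_mem (u := id) (mem_erase.mpr ⟨Ne.symm ‹_›, ‹_›⟩)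
  rcases (hs I hI.1).subset_union_of_mem (hs J hJ.1) (hs K hK.1) hI.2 hJ.2 hK.2 with h | h | h
  · exact redundant hI.1 hJ.1 hK.1 hIJ hIK h
  · exact redundant hJ.1 hI.1 hK.1 hIJ.symm hJK h
  · exact redundant hK.1 hI.1 hJ.1 hIK.symm hJK.symm h

open scoped Classical in
theorem exists_subfamily_biUnion_eq_card_filter_mem_le_two (s : Finset (Set ℝ))
    (hs : ∀ I ∈ s, I.OrdConnected) :
    ∃ t ⊆ s, ⋃ I ∈ t, I = ⋃ I ∈ s, I ∧ ∀ p : ℝ, #{I ∈ t | p ∈ I} ≤ 2 := by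
  obtain ⟨t, ht, hmin⟩ := exists_min_image {t ∈ s.powerset | ⋃ I ∈ t, I = ⋃ I ∈ s, I} card
    ⟨s, by simp⟩
  rw [Finset.mem_filter, Finset.mem_powerset] at ht
  refine ⟨t, ht.1, ht.2, card_filter_mem_le_two_of_ordConnected (fun I hI => hs I (ht.1 hI))
    fun I hI hsub => ?_⟩
  have hunion : ⋃ J ∈ t.erase I, J = ⋃ I ∈ s, I := by
    rw [← ht.2, ← insert_erase hI, set_biUnion_insert, erase_insert (notMem_erase I t),
      union_eq_right.mpr hsub]
  have := hmin (t.erase I) (Finset.mem_filter.mpr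
    ⟨Finset.mem_powerset.mpr ((erase_subset I t).trans ht.1), hunion⟩)
  exact (card_erase_lt_of_mem hI).not_ge this

open scoped Classical in
theorem sum_measure_le_of_card_filter_mem_le {α : Type*} [MeasurableSpace α] (μ : Measure α)
    {t : Finset (Set α)} (ht : ∀ I ∈ t, MeasurableSet I) {k : ℕ}
    (hk : ∀ p, #{I ∈ t | p ∈ I} ≤ k) : ∑ I ∈ t, μ I ≤ k * μ univ := by
  have hcount (p : α) : ∑ I ∈ t, I.indicator 1 p = (#{I ∈ t | p ∈ I} : ℝ≥0∞) := by
    simp [indicator_apply]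
  calc ∑ I ∈ t, μ I = ∫⁻ p, ∑ I ∈ t, I.indicator 1 p ∂μ := by
        rw [lintegral_finsetSum _ fun I hI => measurable_one.indicator (ht I hI)]
        exact sum_congr rfl fun I hI => (lintegral_indicator_one (ht I hI)).symm
    _ ≤ ∫⁻ _, (k : ℝ≥0∞) ∂μ := lintegral_mono fun p => by
        rw [hcount]; exact Nat.cast_le.mpr (hk p)
    _ = k * μ univ := lintegral_const _

theorem measure_sUnion_le_of_ordConnected {μ ν : Measure ℝ} [ν.Regular] {𝒜 : Set (Set ℝ)}
    (hopen : ∀ I ∈ 𝒜, IsOpen I) (hconn : ∀ I ∈ 𝒜, I.OrdConnected) {c : ℝ≥0∞}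
    (hν : ∀ I ∈ 𝒜, ν I ≤ c * μ I) : ν (⋃₀ 𝒜) ≤ 2 * c * μ univ := by
  classical
  rw [(isOpen_sUnion hopen).measure_eq_iSup_isCompact]
  refine iSup₂_le fun K hK𝒜 => iSup_le fun hK => ?_
  rw [sUnion_eq_biUnion] at hK𝒜
  obtain ⟨ℬ, hℬ𝒜, hℬ, hKℬ⟩ := hK.elim_finite_subcover_image (c := id) hopen hK𝒜
  obtain ⟨t, htℬ, hunion, hmult⟩ :=
    exists_subfamily_biUnion_eq_card_filter_mem_le_two hℬ.toFinset
      fun I hI => hconn I (hℬ𝒜 (hℬ.mem_toFinset.mp hI))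
  have ht𝒜 : ∀ I ∈ t, I ∈ 𝒜 := fun I hI => hℬ𝒜 (hℬ.mem_toFinset.mp (htℬ hI))
  calc ν K ≤ ν (⋃ I ∈ t, I) := measure_mono (by simpa [hunion] using hKℬ)
    _ ≤ ∑ I ∈ t, ν I := measure_biUnion_finset_le t id
    _ ≤ ∑ I ∈ t, c * μ I := sum_le_sum fun I hI => hν I (ht𝒜 I hI)
    _ = c * ∑ I ∈ t, μ I := (mul_sum t _ c).symm
    _ ≤ c * (2 * μ univ) := by
        gcongr
        exact_mod_cast sum_measure_le_of_card_filter_mem_le μ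
          (fun I hI => (hopen I (ht𝒜 I hI)).measurableSet) hmult
    _ = 2 * c * μ univ := by ring

theorem setLIntegral_ofReal_le_of_setAverage_le {α : Type*} [MeasurableSpace α]
    {μ : Measure α} {g : α → ℝ} {s : Set α} {c : ℝ} (hg : IntegrableOn g s μ)
    (hg0 : 0 ≤ᵐ[μ.restrict s] g) (hs : μ s ≠ ∞) (h : ⨍ x in s, g x ∂μ ≤ c) :
    ∫⁻ x in s, ENNReal.ofReal (g x) ∂μ ≤ ENNReal.ofReal c * μ s := by
  rw [← ofReal_integral_eq_lintegral_ofReal hg hg0, ← measure_smul_setAverage g hs, smul_eq_mul,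
    measureReal_def, ENNReal.ofReal_mul ENNReal.toReal_nonneg, ENNReal.ofReal_toReal hs, mul_comm]
  gcongr

noncomputable def uncenteredMinimal (μ : Measure ℝ) (g : ℝ → ℝ) (x : ℝ) : ℝ≥0∞ :=
  sInf {r | ∃ I : Set ℝ, IsOpen I ∧ I.OrdConnected ∧ x ∈ I ∧ 0 < μ I ∧
    r = ENNReal.ofReal (⨍ y in I, g y ∂μ)}

theorem setOf_uncenteredMinimal_lt (μ : Measure ℝ) (g : ℝ → ℝ) (c : ℝ≥0∞) :
    {x | uncenteredMinimal μ g x < c} =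
      ⋃₀ {I | IsOpen I ∧ I.OrdConnected ∧ 0 < μ I ∧ ENNReal.ofReal (⨍ y in I, g y ∂μ) < c} := by
  ext x
  simp only [uncenteredMinimal, mem_ofPred_eq, sInf_lt_iff, mem_sUnion]
  constructor
  · rintro ⟨_, ⟨I, hIo, hIc, hxI, hμI, rfl⟩, hlt⟩
    exact ⟨I, ⟨hIo, hIc, hμI, hlt⟩, hxI⟩
  · rintro ⟨I, ⟨hIo, hIc, hμI, hlt⟩, hxI⟩
    exact ⟨_, ⟨I, hIo, hIc, hxI, hμI, rfl⟩, hlt⟩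

theorem uncentered_minimal_estimate (μ : Measure ℝ) [IsProbabilityMeasure μ] (g : ℝ → ℝ)
    (hg : Integrable g μ) (hg0 : ∀ x, 0 ≤ g x) (lam : ℝ) (hlam : 0 < lam) :
    ∫ x in {x : ℝ | sInf {r : ENNReal | ∃ I : Set ℝ, IsOpen I ∧ I.OrdConnected ∧ x ∈ I ∧
          0 < μ I ∧ r = ENNReal.ofReal ((μ I).toReal⁻¹ * ∫ y in I, g y ∂μ)}
        < ENNReal.ofReal lam}, g x ∂μ ≤ 2 * lam := by
  have hlevel : {x : ℝ | sInf {r : ENNReal | ∃ I : Set ℝ, IsOpen I ∧ I.OrdConnected ∧ x ∈ I ∧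
      0 < μ I ∧ r = ENNReal.ofReal ((μ I).toReal⁻¹ * ∫ y in I, g y ∂μ)} < ENNReal.ofReal lam} =
      {x | uncenteredMinimal μ g x < ENNReal.ofReal lam} := by
    simp only [uncenteredMinimal, setAverage_eq, smul_eq_mul, measureReal_def]
  set 𝒜 := {I | IsOpen I ∧ I.OrdConnected ∧ 0 < μ I ∧
    ENNReal.ofReal (⨍ y in I, g y ∂μ) < ENNReal.ofReal lam}
  set ν := μ.withDensity fun x => ENNReal.ofReal (g x)
  have : IsFiniteMeasure ν := isFiniteMeasure_withDensity_ofReal hg.2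
  have hν : ν (⋃₀ 𝒜) ≤ 2 * ENNReal.ofReal lam * μ univ :=
    measure_sUnion_le_of_ordConnected (fun I hI => hI.1) (fun I hI => hI.2.1) fun I hI => by
      rw [withDensity_apply _ hI.1.measurableSet]
      exact setLIntegral_ofReal_le_of_setAverage_le hg.integrableOn (ae_of_all _ hg0)
        (measure_ne_top μ I) ((ENNReal.ofReal_lt_ofReal_iff hlam).mp hI.2.2.2).le
  have hopen : IsOpen (⋃₀ 𝒜) := isOpen_sUnion fun I hI => hI.1
  rw [hlevel, setOf_uncenteredMinimal_lt, integral_eq_lintegral_of_nonneg_ae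
    (ae_of_all _ hg0) hg.1.restrict, ← withDensity_apply _ hopen.measurableSet]
  calc (ν (⋃₀ 𝒜)).toReal ≤ (2 * ENNReal.ofReal lam * μ univ).toReal :=
        ENNReal.toReal_mono (by finiteness) hν
    _ = 2 * lam := by simp [hlam.le]
end
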